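/- arXiv:math/0511323 — 3 statements merged into one kernel-verified Lean document; each statement's English description precedes it below -/
import Mathlib

section
/- Let q be a real number with 0<q<1, let f be a positive integer, let χ be a NON-trivial Dirichlet character modulo f with values in ℂ, let x>0 and w₁>0 be real, and let s∈ℂ with s≠1. Then w₁·Σ_{n=1}^∞ χ(n)·q^{x+w₁n}·[x+w₁n]_q^{-s} = [f]_q^{-s}·Σ_{a=1}^{f} χ(a)·ζ_{q^f}(s,(x+w₁a)/f | w₁), where ζ_{q^f} is the Barnes-type Changhee q-zeta function with base q^f. (Theorem 1: for non-trivial χ the correction terms of the zeta functions cancel because Σ_{a=1}^f χ(a)=0.) -/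
/-! Split the series along the residue classes `n = f k + a`, `1 ≤ a ≤ f`. Since
`[f y]_q = [f]_q [y]_{q^f}` and `q^{f y} = (q^f)^y`, the class of `a` sums to `[f]_q^{-s} χ(a)`
times the series in `ζ_{q^f}(s, (x + w₁ a)/f | w₁)`. The constant terms
`-(1-q^f)^s/((s-1) log q^f)` of these zeta functions do not depend on `a`, so they are
annihilated by `∑_{a=1}^f χ(a) = 0`. -/

open Complex

/-- The `q`-number `[y]_q = (1 - q^y)/(1 - q)`, where `q^y` is the real power. -/
noncomputable def qNum (q y : ℝ) : ℝ := (1 - q ^ y) / (1 - q)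

/-- The Barnes-type Changhee `q`-zeta function
`ζ_q(s, w | w₁) = -(1-q)^s/((s-1)·log q) + w₁·Σ_{k≥0} q^{w₁k+w}·[w₁k+w]_q^{-s}`. -/
noncomputable def chZeta (q : ℝ) (s : ℂ) (w w₁ : ℝ) : ℂ :=
  -((1 - q : ℝ) : ℂ) ^ s / ((s - 1) * ((Real.log q : ℝ) : ℂ)) +
    (w₁ : ℂ) * ∑' k : ℕ, ((q ^ (w₁ * (k : ℝ) + w) : ℝ) : ℂ) *
      ((qNum q (w₁ * (k : ℝ) + w) : ℝ) : ℂ) ^ (-s)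

open Finset

section QNumber

variable {q : ℝ}

lemma qNum_nonneg (hq0 : 0 ≤ q) (hq1 : q < 1) {y : ℝ} (hy : 0 ≤ y) : 0 ≤ qNum q y :=
  div_nonneg (sub_nonneg.mpr (Real.rpow_le_one hq0 hq1.le hy)) (sub_nonneg.mpr hq1.le)

lemma qNum_pos (hq0 : 0 ≤ q) (hq1 : q < 1) {y : ℝ} (hy : 0 < y) : 0 < qNum q y :=
  div_pos (sub_pos.mpr (Real.rpow_lt_one hq0 hq1 hy)) (sub_pos.mpr hq1)

lemma qNum_le_inv_one_sub (hq0 : 0 ≤ q) (hq1 : q < 1) (y : ℝ) : qNum q y ≤ (1 - q)⁻¹ := by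
  rw [qNum, div_eq_mul_inv]
  exact mul_le_of_le_one_left (inv_nonneg.mpr (sub_nonneg.mpr hq1.le))
    (sub_le_self 1 (Real.rpow_nonneg hq0 y))

lemma qNum_monotone (hq0 : 0 < q) (hq1 : q < 1) : Monotone (qNum q) := fun _ _ hyz =>
  div_le_div_of_nonneg_right (sub_le_sub_left (Real.rpow_le_rpow_of_exponent_ge hq0 hq1.le hyz) 1)
    (sub_nonneg.mpr hq1.le)

lemma qNum_natCast_mul (hq0 : 0 ≤ q) (hq1 : q < 1) {n : ℕ} (hn : n ≠ 0) (y : ℝ) :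
    qNum q (n * y) = qNum q n * qNum (q ^ n) y := by
  have hq : 1 - q ≠ 0 := (sub_pos.mpr hq1).ne'
  have hqn : 1 - q ^ n ≠ 0 := (sub_pos.mpr (pow_lt_one₀ hq0 hq1 hn)).ne'
  simp only [qNum, Real.rpow_mul hq0, Real.rpow_natCast]
  field_simp

end QNumber

noncomputable def qTerm (q : ℝ) (s : ℂ) (y : ℝ) : ℂ :=
  ((q ^ y : ℝ) : ℂ) * ((qNum q y : ℝ) : ℂ) ^ (-s)

lemma chZeta_eq_add_tsum_qTerm (q : ℝ) (s : ℂ) (w w₁ : ℝ) :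
    chZeta q s w w₁ = -((1 - q : ℝ) : ℂ) ^ s / ((s - 1) * ((Real.log q : ℝ) : ℂ)) +
      (w₁ : ℂ) * ∑' k : ℕ, qTerm q s (w₁ * k + w) :=
  rfl

section QTerm

variable {q : ℝ}

lemma qTerm_natCast_mul (hq0 : 0 ≤ q) (hq1 : q < 1) {n : ℕ} (hn : n ≠ 0) {y : ℝ} (hy : 0 ≤ y)
    (s : ℂ) : qTerm q s (n * y) = ((qNum q n : ℝ) : ℂ) ^ (-s) * qTerm (q ^ n) s y := by
  have hqn : q ^ n < 1 := pow_lt_one₀ hq0 hq1 hn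
  rw [qTerm, qTerm, qNum_natCast_mul hq0 hq1 hn, Complex.ofReal_mul,
    mul_cpow_ofReal_nonneg (qNum_nonneg hq0 hq1 n.cast_nonneg)
      (qNum_nonneg (pow_nonneg hq0 n) hqn hy),
    Real.rpow_mul hq0, Real.rpow_natCast]
  ring

lemma norm_qTerm_le (hq0 : 0 < q) (hq1 : q < 1) {x y : ℝ} (hx : 0 < x) (hxy : x ≤ y) (s : ℂ) :
    ‖qTerm q s y‖ ≤ max (qNum q x ^ (-s.re)) ((1 - q)⁻¹ ^ (-s.re)) * q ^ y := by
  have hx' : 0 < qNum q x := qNum_pos hq0.le hq1 hx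
  have hy' : 0 < qNum q y := qNum_pos hq0.le hq1 (hx.trans_le hxy)
  have hbound : qNum q y ^ (-s.re) ≤ max (qNum q x ^ (-s.re)) ((1 - q)⁻¹ ^ (-s.re)) := by
    rcases le_total 0 (-s.re) with ht | ht
    · exact le_max_of_le_right
        (Real.rpow_le_rpow hy'.le (qNum_le_inv_one_sub hq0.le hq1 y) ht)
    · exact le_max_of_le_left
        (Real.rpow_le_rpow_of_nonpos hx' (qNum_monotone hq0 hq1 hxy) ht)
  rw [qTerm, norm_mul, norm_cpow_eq_rpow_re_of_pos hy', norm_real, Real.norm_of_nonneg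
    (Real.rpow_nonneg hq0.le y), neg_re, mul_comm]
  exact mul_le_mul_of_nonneg_right hbound (Real.rpow_nonneg hq0.le y)

lemma summable_qTerm (hq0 : 0 < q) (hq1 : q < 1) {x w₁ : ℝ} (hx : 0 < x) (hw₁ : 0 < w₁)
    (s : ℂ) : Summable fun n : ℕ => qTerm q s (x + w₁ * n) := by
  set C := max (qNum q x ^ (-s.re)) ((1 - q)⁻¹ ^ (-s.re))
  have hgeom : Summable fun n : ℕ => C * q ^ x * (q ^ w₁) ^ n :=
    (summable_geometric_of_lt_one (Real.rpow_nonneg hq0.le w₁)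
      (Real.rpow_lt_one hq0.le hq1 hw₁)).mul_left _
  refine hgeom.of_norm_bounded fun n => ?_
  have hpow : q ^ (x + w₁ * n) = q ^ x * (q ^ w₁) ^ n := by
    rw [Real.rpow_add hq0, Real.rpow_mul hq0.le, Real.rpow_natCast]
  rw [mul_assoc, ← hpow]
  exact norm_qTerm_le hq0 hq1 hx (le_add_of_nonneg_right (by positivity)) s

end QTerm

section ResidueClasses

variable {M : Type*} [AddCommMonoid M]

lemma Finset.sum_Icc_one_eq_sum_range_succ (N : ℕ) (φ : ℕ → M) :
    ∑ a ∈ Icc 1 N, φ a = ∑ i ∈ range N, φ (i + 1) := by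
  rw [← Ico_add_one_right_eq_Icc, sum_Ico_eq_sum_range]
  simp only [add_tsub_cancel_right, add_comm 1]

lemma ZMod.sum_univ_val_eq_sum_range (N : ℕ) [NeZero N] (ψ : ℕ → M) :
    ∑ j : ZMod N, ψ j.val = ∑ i ∈ range N, ψ i := by
  obtain ⟨n, rfl⟩ : ∃ n, N = n + 1 := Nat.exists_eq_succ_of_ne_zero (NeZero.ne N)
  exact Fin.sum_univ_eq_sum_range ψ (n + 1)

lemma ZMod.sum_Icc_one_natCast (N : ℕ) [NeZero N] (φ : ZMod N → M) :
    ∑ a ∈ Icc 1 N, φ a = ∑ z : ZMod N, φ z := by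
  rw [sum_Icc_one_eq_sum_range_succ, ← ZMod.sum_univ_val_eq_sum_range N (fun i => φ ↑(i + 1)),
    ← Equiv.sum_comp (Equiv.addRight (1 : ZMod N)) φ]
  simp only [Nat.cast_add, Nat.cast_one, ZMod.natCast_val, ZMod.cast_id', id, Equiv.coe_addRight]

lemma tsum_succ_eq_sum_Icc_tsum_mul_add {R : Type*} [AddCommGroup R] [UniformSpace R]
    [IsUniformAddGroup R] [CompleteSpace R] [T0Space R] {G : ℕ → R}
    (hG : Summable fun n => G (n + 1)) (N : ℕ) [NeZero N] :
    ∑' n, G (n + 1) = ∑ a ∈ Icc 1 N, ∑' k, G (N * k + a) := by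
  rw [Nat.sumByResidueClasses hG N, ZMod.sum_univ_val_eq_sum_range N
    (fun i => ∑' m, G (i + N * m + 1)), sum_Icc_one_eq_sum_range_succ]
  exact sum_congr rfl fun i _ => tsum_congr fun m => congrArg G (by ring)

end ResidueClasses

lemma DirichletCharacter.sum_Icc_one_eq_zero {N : ℕ} [NeZero N] {χ : DirichletCharacter ℂ N}
    (hχ : χ ≠ 1) : ∑ a ∈ Icc 1 N, χ a = 0 := by
  rw [ZMod.sum_Icc_one_natCast N χ]
  exact MulChar.sum_eq_zero_of_ne_one hχ

lemma zmod_mul_qTerm_mul_add {q : ℝ} (hq0 : 0 ≤ q) (hq1 : q < 1) {N : ℕ} (hN : N ≠ 0)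
    (Φ : ZMod N → ℂ) {x w₁ : ℝ} (hx : 0 ≤ x) (hw₁ : 0 ≤ w₁) (s : ℂ) (a k : ℕ) :
    Φ ((N * k + a : ℕ) : ZMod N) * qTerm q s (x + w₁ * ((N * k + a : ℕ) : ℝ))
      = ((qNum q N : ℝ) : ℂ) ^ (-s) *
        (Φ a * qTerm (q ^ N) s (w₁ * k + (x + w₁ * a) / N)) := by
  have hNR : (N : ℝ) ≠ 0 := Nat.cast_ne_zero.mpr hN
  have harg : x + w₁ * ((N * k + a : ℕ) : ℝ) = N * (w₁ * k + (x + w₁ * a) / N) := by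
    push_cast
    field_simp
    ring
  rw [harg, qTerm_natCast_mul hq0 hq1 hN (by positivity)]
  simp only [Nat.cast_add, Nat.cast_mul, ZMod.natCast_self, zero_mul, zero_add]
  ring

theorem stmt1_general (q : ℝ) (hq0 : 0 < q) (hq1 : q < 1) (f : ℕ) (hf : 0 < f)
    (χ : DirichletCharacter ℂ f) (hχ : χ ≠ 1) (x w₁ : ℝ) (hx : 0 < x) (hw₁ : 0 < w₁)
    (s : ℂ) :
    (w₁ : ℂ) * ∑' n : ℕ, χ ((n + 1 : ℕ) : ZMod f) *
        ((q ^ (x + w₁ * ((n : ℝ) + 1)) : ℝ) : ℂ) *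
        ((qNum q (x + w₁ * ((n : ℝ) + 1)) : ℝ) : ℂ) ^ (-s)
      = ((qNum q (f : ℝ) : ℝ) : ℂ) ^ (-s) *
        ∑ a ∈ Finset.Icc 1 f, χ ((a : ℕ) : ZMod f) *
          chZeta (q ^ f) s ((x + w₁ * (a : ℝ)) / (f : ℝ)) w₁ := by
  have : NeZero f := ⟨hf.ne'⟩
  set G : ℕ → ℂ := fun n => χ n * qTerm q s (x + w₁ * n)
  have hG : Summable fun n => G (n + 1) := by
    refine ((summable_nat_add_iff 1).mpr (summable_qTerm hq0 hq1 hx hw₁ s).norm).of_norm_bounded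
      fun n => ?_
    rw [norm_mul]
    exact mul_le_of_le_one_left (norm_nonneg _) (χ.norm_le_one _)
  have hclass (a : ℕ) : ∑' k, G (f * k + a) = ((qNum q f : ℝ) : ℂ) ^ (-s) *
      (χ a * ∑' k : ℕ, qTerm (q ^ f) s (w₁ * k + (x + w₁ * a) / f)) := by
    simp only [G, zmod_mul_qTerm_mul_add hq0.le hq1 hf.ne' χ hx.le hw₁.le, tsum_mul_left]
  calc _ = (w₁ : ℂ) * ∑' n, G (n + 1) := by
        simp only [G, qTerm, Nat.cast_add, Nat.cast_one, mul_assoc]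
    _ = (w₁ : ℂ) * ∑ a ∈ Icc 1 f, ∑' k, G (f * k + a) := by
        rw [tsum_succ_eq_sum_Icc_tsum_mul_add hG f]
    _ = _ := by
        simp only [hclass, chZeta_eq_add_tsum_qTerm, mul_add, sum_add_distrib, ← sum_mul,
          χ.sum_Icc_one_eq_zero hχ, zero_mul, zero_add]
        rw [mul_sum, mul_sum]
        exact sum_congr rfl fun a _ => by ring

/-- Theorem 1: for a non-trivial Dirichlet character `χ` mod `f`, the two-variable Dirichlet
`q`-`L`-function decomposes into Barnes-type Changhee `q`-zeta functions with base `q^f`. -/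
theorem stmt1 (q : ℝ) (hq0 : 0 < q) (hq1 : q < 1) (f : ℕ) (hf : 0 < f)
    (χ : DirichletCharacter ℂ f) (hχ : χ ≠ 1) (x w₁ : ℝ) (hx : 0 < x) (hw₁ : 0 < w₁)
    (s : ℂ) (hs : s ≠ 1) :
    (w₁ : ℂ) * ∑' n : ℕ, χ ((n + 1 : ℕ) : ZMod f) *
        ((q ^ (x + w₁ * ((n : ℝ) + 1)) : ℝ) : ℂ) *
        ((qNum q (x + w₁ * ((n : ℝ) + 1)) : ℝ) : ℂ) ^ (-s)
      = ((qNum q (f : ℝ) : ℝ) : ℂ) ^ (-s) *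
        ∑ a ∈ Finset.Icc 1 f, χ ((a : ℕ) : ZMod f) *
          chZeta (q ^ f) s ((x + w₁ * (a : ℝ)) / (f : ℝ)) w₁ :=
  stmt1_general q hq0 hq1 f hf χ hχ x w₁ hx hw₁ s
end

section
/- Let q be a real number with 0<q<1, let w>0 and w₁>0 be real, and let n be a positive integer. Then (1-q)^{1-n}/(n·log q) + w₁·Σ_{k=0}^∞ q^{w₁k+w}·[w₁k+w]_q^{n-1} = -(1/n)·(1-q)^{-n}·( (q-1)/log q + Σ_{l=1}^{n} binom(n,l)·(-1)^l·q^{l·w}·( l·w₁·(1-q) )/( 1-q^{l·w₁} ) ). Equivalently, ζ_q(1-n,w|w₁) = -β_n(w:q|w₁)/n, where ζ_q is the Barnes-type Changhee q-zeta function and β_n the Barnes-type Changhee q-Bernoulli polynomial in closed form. -/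
/-- The Barnes-type Changhee `q`-Bernoulli polynomial in closed form:
`β_n(w : q | w₁) = (1-q)^{-n}·( (q-1)/log q
  + Σ_{l=1}^{n} C(n,l)·(-1)^l·q^{lw}·(l·w₁·(1-q))/(1-q^{l·w₁}) )`. -/
noncomputable def chBeta (n : ℕ) (w q w₁ : ℝ) : ℝ :=
  ((1 - q) ^ n)⁻¹ * ((q - 1) / Real.log q +
    ∑ l ∈ Finset.Icc 1 n, (n.choose l : ℝ) * (-1) ^ l * q ^ ((l : ℝ) * w) *
      ((l : ℝ) * w₁ * (1 - q)) / (1 - q ^ ((l : ℝ) * w₁)))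

/-!
Expanding `[x]_q^(n-1)` binomially turns each summand `q^x [x]_q^(n-1)` into a combination of the
exponentials `q^((j+1)x)`, `j < n`. Along `x = w₁k + w` these are geometric series in `k`, with sums
`q^((j+1)w) / (1 - q^((j+1)w₁))`, and `(j+1)·C(n, j+1) = n·C(n-1, j)` matches the result termwise
with `-β_n / n`.
-/

open Finset

theorem mul_one_sub_pow_eq_sum {R : Type*} [CommRing R] (y : R) (m : ℕ) :
    y * (1 - y) ^ m = ∑ j ∈ range (m + 1), (m.choose j : R) * (-1) ^ j * y ^ (j + 1) := by
  rw [sub_eq_neg_add, add_pow, mul_sum]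
  refine sum_congr rfl fun j _ => ?_
  rw [one_pow, neg_pow]
  ring

theorem rpow_mul_qNum_pow {q : ℝ} (hq : 0 < q) (x : ℝ) (m : ℕ) :
    q ^ x * qNum q x ^ m =
      ∑ j ∈ range (m + 1), (m.choose j : ℝ) * (-1) ^ j / (1 - q) ^ m * q ^ (((j : ℝ) + 1) * x) := by
  have hpow (j : ℕ) : q ^ (((j : ℝ) + 1) * x) = (q ^ x) ^ (j + 1) := by
    rw [mul_comm, ← Nat.cast_add_one, Real.rpow_mul_natCast hq.le]
  simp only [qNum, div_pow, ← mul_div_assoc, mul_one_sub_pow_eq_sum, sum_div, hpow]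
  refine sum_congr rfl fun j _ => ?_
  ring

theorem hasSum_rpow_mul_add {q : ℝ} (hq0 : 0 < q) (hq1 : q < 1) {a : ℝ} (ha : 0 < a) (b : ℝ) :
    HasSum (fun k : ℕ => q ^ (a * k + b)) (q ^ b / (1 - q ^ a)) := by
  have hqa : q ^ a < 1 := Real.rpow_lt_one hq0.le hq1 ha
  have hterm (k : ℕ) : q ^ (a * k + b) = q ^ b * (q ^ a) ^ k := by
    rw [Real.rpow_add hq0, Real.rpow_mul_natCast hq0.le, mul_comm]
  simpa only [hterm, div_eq_mul_inv] using
    (hasSum_geometric_of_lt_one (Real.rpow_nonneg hq0.le a) hqa).mul_left (q ^ b)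

theorem hasSum_rpow_mul_qNum_pow {q : ℝ} (hq0 : 0 < q) (hq1 : q < 1) (w : ℝ) {w₁ : ℝ}
    (hw₁ : 0 < w₁) (m : ℕ) :
    HasSum (fun k : ℕ => q ^ (w₁ * k + w) * qNum q (w₁ * k + w) ^ m)
      (∑ j ∈ range (m + 1), (m.choose j : ℝ) * (-1) ^ j / (1 - q) ^ m *
        (q ^ (((j : ℝ) + 1) * w) / (1 - q ^ (((j : ℝ) + 1) * w₁)))) := by
  simp only [rpow_mul_qNum_pow hq0]
  refine hasSum_sum fun j _ => HasSum.mul_left _ ?_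
  simpa only [mul_add, ← mul_assoc] using
    hasSum_rpow_mul_add hq0 hq1 (by positivity : 0 < ((j : ℝ) + 1) * w₁) (((j : ℝ) + 1) * w)

theorem chBeta_succ {q : ℝ} (hq : q ≠ 1) (m : ℕ) (w w₁ : ℝ) :
    chBeta (m + 1) w q w₁ = ((1 - q) ^ (m + 1))⁻¹ * ((q - 1) / Real.log q) -
      (m + 1) * w₁ * ∑ j ∈ range (m + 1), (m.choose j : ℝ) * (-1) ^ j / (1 - q) ^ m *
        (q ^ (((j : ℝ) + 1) * w) / (1 - q ^ (((j : ℝ) + 1) * w₁))) := by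
  have h1q : 1 - q ≠ 0 := sub_ne_zero.mpr hq.symm
  rw [chBeta, mul_add, sub_eq_add_neg _ (_ * _), add_right_inj, ← Ico_add_one_right_eq_Icc,
    sum_Ico_eq_sum_range, Nat.add_sub_cancel, mul_sum, mul_sum, ← sum_neg_distrib]
  refine sum_congr rfl fun j _ => ?_
  have hchoose : ((m + 1).choose (1 + j) : ℝ) * (j + 1) = (m + 1) * m.choose j := by
    rw [add_comm 1 j]
    exact_mod_cast (Nat.add_one_mul_choose_eq m j).symm
  push_cast
  rw [add_comm 1 (j : ℝ), pow_succ, pow_add (-1 : ℝ), pow_one]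
  field_simp
  rw [hchoose]
  ring

theorem stmt5_general (q : ℝ) (hq0 : 0 < q) (hq1 : q < 1) (w w₁ : ℝ) (hw₁ : 0 < w₁)
    (n : ℕ) (hn : 0 < n) :
    (1 - q) ^ (1 - (n : ℤ)) / ((n : ℝ) * Real.log q) +
        w₁ * ∑' k : ℕ, q ^ (w₁ * (k : ℝ) + w) * qNum q (w₁ * (k : ℝ) + w) ^ (n - 1)
      = -(1 / (n : ℝ)) * chBeta n w q w₁ := by
  obtain ⟨m, rfl⟩ := Nat.exists_eq_add_one_of_ne_zero hn.ne'
  have h1q : 1 - q ≠ 0 := sub_ne_zero.mpr hq1.ne'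
  have hlog : Real.log q ≠ 0 := (Real.log_neg hq0 hq1).ne
  have hzpow : (1 - q) ^ (1 - ((m + 1 : ℕ) : ℤ)) = ((1 - q) ^ m)⁻¹ := by
    rw [show 1 - ((m + 1 : ℕ) : ℤ) = -m by push_cast; ring, zpow_neg, zpow_natCast]
  rw [Nat.add_sub_cancel, (hasSum_rpow_mul_qNum_pow hq0 hq1 w hw₁ m).tsum_eq,
    chBeta_succ hq1.ne, hzpow]
  generalize (∑ j ∈ range (m + 1), _ : ℝ) = S
  push_cast
  field_simp
  ring

/-- `ζ_q(1-n, w | w₁) = -β_n(w : q | w₁)/n` for positive integers `n`: the Barnes-type Changhee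
`q`-zeta function interpolates the Barnes-type Changhee `q`-Bernoulli polynomials. -/
theorem stmt5 (q : ℝ) (hq0 : 0 < q) (hq1 : q < 1) (w w₁ : ℝ) (hw : 0 < w) (hw₁ : 0 < w₁)
    (n : ℕ) (hn : 0 < n) :
    (1 - q) ^ (1 - (n : ℤ)) / ((n : ℝ) * Real.log q) +
        w₁ * ∑' k : ℕ, q ^ (w₁ * (k : ℝ) + w) * qNum q (w₁ * (k : ℝ) + w) ^ (n - 1)
      = -(1 / (n : ℝ)) * chBeta n w q w₁ :=
  stmt5_general q hq0 hq1 w w₁ hw₁ n hn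
end

section
/- Let q be a real number with 0<q<1, let f be a positive integer, let χ be a Dirichlet character modulo f with values in ℂ, let x>0 and w₁>0 be real, let n be a positive integer and ρ>0. Then the circle integral over the circle of radius ρ centred at 0 satisfies ∮_{|z|=ρ} z^{-(n+1)}·( z·w₁·Σ_{m=1}^∞ χ(m)·q^{w₁m}·exp(-[w₁m+x]_q·z) ) dz = 2πi·(-1)^{n-1}·(w₁/(n-1)!)·Σ_{m=1}^∞ χ(m)·q^{w₁m}·[w₁m+x]_q^{n-1}. (This is the residue computation B(1-n,x) = 2πi·((-1)^n/n!)·β_{n,χ}(x:q|w₁) used in the second proof of Theorem 2: the integrand has a pole of order n+1 at z=0 and the integral extracts the n-th Taylor coefficient of the entire generating function z·w₁·Σ_m χ(m)q^{w₁m}e^{-[w₁m+x]_q z}.) -/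
/-!
On the circle `z ≠ 0`, so the integrand is `w₁ · z^{-n} · Σ_m a_m e^{b_m z}` with
`a_m = χ(m) q^{w₁m}` and `b_m = -[w₁m+x]_q`. Since `|a_m| ≤ (q^{w₁})^m` and
`|b_m| ≤ (1 + q^x)/(1 - q)`, the series is dominated on the circle by a convergent geometric
series, so the integral can be taken term by term, and each term is the Cauchy integral
`∮ z^{-n} e^{bz} dz = 2πi b^{n-1}/(n-1)!`.
-/

open Complex

open Metric

theorem circleIntegral.hasSum_integral_of_norm_le {E ι : Type*} [NormedAddCommGroup E]
    [NormedSpace ℂ E] [CompleteSpace E] [Countable ι] {F : ι → ℂ → E} {u : ι → ℝ} {c : ℂ}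
    {R : ℝ} (hR : 0 ≤ R) (hF : ∀ i, ContinuousOn (F i) (sphere c R))
    (hFu : ∀ i, ∀ z ∈ sphere c R, ‖F i z‖ ≤ u i) (hu : Summable u) :
    HasSum (fun i ↦ ∮ z in C(c, R), F i z) (∮ z in C(c, R), ∑' i, F i z) := by
  have := (tendstoUniformlyOn_tsum hu hFu).tendsto_circleIntegral_of_continuousOn hR
    (.of_forall fun s ↦ continuousOn_finsetSum s fun i _ ↦ hF i)
  simp only [circleIntegral.integral_fun_sum fun i _ ↦ (hF i).circleIntegrable hR] at this
  exact this

theorem circleIntegral_zpow_neg_succ_mul_exp (c : ℂ) (k : ℕ) {R : ℝ} (hR : 0 < R) :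
    (∮ z in C(0, R), z ^ (-(k + 1 : ℤ)) * exp (c * z)) = 2 * Real.pi * I * c ^ k / k.factorial := by
  have := DifferentiableOn.circleIntegral_one_div_sub_center_pow_smul (c := 0) hR k
    (f := fun z ↦ exp (c * z)) (by fun_prop)
  rw [iteratedDeriv_cexp_const_mul] at this
  convert this using 1
  · simp only [sub_zero, one_div, smul_eq_mul, zpow_neg, ← Nat.cast_succ, zpow_natCast]
  · simp only [mul_zero, exp_zero, mul_one, smul_eq_mul]
    ring

theorem circleIntegral_zpow_neg_succ_mul_tsum_exp {ι : Type*} [Countable ι] {a b : ι → ℂ}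
    {B : ℝ} (ha : Summable fun i ↦ ‖a i‖) (hb : ∀ i, ‖b i‖ ≤ B) (k : ℕ) {R : ℝ} (hR : 0 < R) :
    (∮ z in C(0, R), z ^ (-(k + 1 : ℤ)) * ∑' i, a i * exp (b i * z)) =
      2 * Real.pi * I / k.factorial * ∑' i, a i * b i ^ k := by
  have hsum := circleIntegral.hasSum_integral_of_norm_le (c := 0) hR.le
    (F := fun i z ↦ z ^ (-(k + 1 : ℤ)) * (a i * exp (b i * z)))
    (u := fun i ↦ R ^ (-(k + 1 : ℤ)) * (‖a i‖ * Real.exp (B * R)))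
    (fun i ↦ ?_) (fun i z hz ↦ ?_) ((ha.mul_right _).mul_left _)
  · simp only [tsum_mul_left] at hsum
    rw [← hsum.tsum_eq, ← tsum_mul_left]
    refine tsum_congr fun i ↦ ?_
    simp only [mul_left_comm _ (a i), circleIntegral.integral_const_mul,
      circleIntegral_zpow_neg_succ_mul_exp _ _ hR]
    ring
  · have : ∀ z ∈ sphere (0 : ℂ) R, z ≠ 0 ∨ 0 ≤ -(k + 1 : ℤ) :=
      fun z hz ↦ .inl (ne_zero_of_mem_sphere hR.ne' ⟨z, hz⟩)
    fun_prop (disch := assumption)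
  · have hzR : ‖z‖ = R := mem_sphere_zero_iff_norm.mp hz
    have hexp : ‖exp (b i * z)‖ ≤ Real.exp (B * R) :=
      calc ‖exp (b i * z)‖ ≤ Real.exp ‖b i * z‖ := norm_exp_le_exp_norm _
        _ ≤ Real.exp (B * R) := by
          rw [norm_mul, hzR]; gcongr; exact hb i
    rw [norm_mul, norm_mul, norm_zpow, hzR]
    gcongr

theorem abs_qNum_le {q x y : ℝ} (hq0 : 0 < q) (hq1 : q < 1) (hxy : x ≤ y) :
    |qNum q y| ≤ (1 + q ^ x) / (1 - q) := by
  have hq : 0 < 1 - q := by linarith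
  rw [qNum, abs_div, abs_of_pos hq]
  gcongr
  calc |1 - q ^ y| ≤ |1| + |q ^ y| := abs_sub _ _
    _ = 1 + q ^ y := by rw [abs_one, abs_of_pos (Real.rpow_pos_of_pos hq0 y)]
    _ ≤ 1 + q ^ x := add_le_add_right (Real.rpow_le_rpow_of_exponent_ge hq0 hq1.le hxy) 1

theorem summable_rpow_mul_add_one {q c : ℝ} (hq0 : 0 < q) (hq1 : q < 1) (hc : 0 < c) :
    Summable fun m : ℕ ↦ q ^ (c * ((m : ℝ) + 1)) := by
  have hqc : q ^ c < 1 := Real.rpow_lt_one hq0.le hq1 hc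
  have hgeom := (summable_geometric_of_lt_one (Real.rpow_nonneg hq0.le c) hqc).mul_left (q ^ c)
  refine hgeom.congr fun m ↦ ?_
  rw [Real.rpow_mul hq0.le, Real.rpow_add_one (Real.rpow_pos_of_pos hq0 c).ne', Real.rpow_natCast,
    mul_comm]

theorem stmt9_general (q : ℝ) (hq0 : 0 < q) (hq1 : q < 1) (f : ℕ)
    (χ : DirichletCharacter ℂ f) (x w₁ : ℝ) (hw₁ : 0 < w₁)
    (n : ℕ) (hn : 0 < n) (ρ : ℝ) (hρ : 0 < ρ) :
    (∮ z in C(0, ρ), z ^ (-(n + 1 : ℤ)) *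
        (z * (w₁ : ℂ) * ∑' m : ℕ, χ ((m + 1 : ℕ) : ZMod f) *
          ((q ^ (w₁ * ((m : ℝ) + 1)) : ℝ) : ℂ) *
          Complex.exp (-((qNum q (w₁ * ((m : ℝ) + 1) + x) : ℝ) : ℂ) * z)))
      = 2 * (Real.pi : ℂ) * Complex.I * (-1) ^ (n - 1) * ((w₁ : ℂ) / ((n - 1).factorial : ℂ)) *
        ∑' m : ℕ, χ ((m + 1 : ℕ) : ZMod f) * ((q ^ (w₁ * ((m : ℝ) + 1)) : ℝ) : ℂ) *
          ((qNum q (w₁ * ((m : ℝ) + 1) + x) : ℝ) : ℂ) ^ (n - 1) := by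
  obtain ⟨k, rfl⟩ := Nat.exists_eq_add_one_of_ne_zero hn.ne'
  let a : ℕ → ℂ := fun m ↦ χ ((m + 1 : ℕ) : ZMod f) * ((q ^ (w₁ * ((m : ℝ) + 1)) : ℝ) : ℂ)
  let b : ℕ → ℝ := fun m ↦ qNum q (w₁ * ((m : ℝ) + 1) + x)
  have ha : Summable fun m ↦ ‖a m‖ := by
    refine (summable_rpow_mul_add_one hq0 hq1 hw₁).of_nonneg_of_le (fun m ↦ norm_nonneg _)
      fun m ↦ ?_
    rw [norm_mul, norm_real, Real.norm_of_nonneg (Real.rpow_nonneg hq0.le _)]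
    exact mul_le_of_le_one_left (Real.rpow_nonneg hq0.le _) (χ.norm_le_one _)
  have hb : ∀ m, ‖-(b m : ℂ)‖ ≤ (1 + q ^ x) / (1 - q) := fun m ↦ by
    rw [norm_neg, norm_real, Real.norm_eq_abs]
    exact abs_qNum_le hq0 hq1 (le_add_of_nonneg_left (by positivity))
  calc _ = ∮ z in C(0, ρ), (w₁ : ℂ) * (z ^ (-(k + 1 : ℤ)) * ∑' m, a m * exp (-(b m : ℂ) * z)) :=
        circleIntegral.integral_congr hρ.le fun z hz ↦ by
          have hz0 : z ≠ 0 := ne_zero_of_mem_sphere hρ.ne' ⟨z, hz⟩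
          simp only [a, b, Nat.cast_succ, neg_add, zpow_add₀ hz0, zpow_neg_one]
          field_simp
    _ = (w₁ : ℂ) * (2 * Real.pi * I / k.factorial * ∑' m, a m * (-(b m : ℂ)) ^ k) := by
        rw [circleIntegral.integral_const_mul, circleIntegral_zpow_neg_succ_mul_tsum_exp ha hb k hρ]
    _ = _ := by
        have hterm : ∀ m, a m * (-(b m : ℂ)) ^ k = (-1) ^ k * (a m * (b m : ℂ) ^ k) := fun m ↦ by
          ring
        rw [tsum_congr hterm, tsum_mul_left, Nat.add_sub_cancel]
        ring

/-- The residue computation `B(1-n, x) = 2πi·((-1)^n/n!)·β_{n,χ}(x : q | w₁)` from the second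
proof of Theorem 2: the circle integral extracts the `n`-th Taylor coefficient of the entire
generating function `z·w₁·Σ_m χ(m)·q^{w₁m}·e^{-[w₁m+x]_q·z}`. -/
theorem stmt9 (q : ℝ) (hq0 : 0 < q) (hq1 : q < 1) (f : ℕ) (hf : 0 < f)
    (χ : DirichletCharacter ℂ f) (x w₁ : ℝ) (hx : 0 < x) (hw₁ : 0 < w₁)
    (n : ℕ) (hn : 0 < n) (ρ : ℝ) (hρ : 0 < ρ) :
    (∮ z in C(0, ρ), z ^ (-(n + 1 : ℤ)) *
        (z * (w₁ : ℂ) * ∑' m : ℕ, χ ((m + 1 : ℕ) : ZMod f) *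
          ((q ^ (w₁ * ((m : ℝ) + 1)) : ℝ) : ℂ) *
          Complex.exp (-((qNum q (w₁ * ((m : ℝ) + 1) + x) : ℝ) : ℂ) * z)))
      = 2 * (Real.pi : ℂ) * Complex.I * (-1) ^ (n - 1) * ((w₁ : ℂ) / ((n - 1).factorial : ℂ)) *
        ∑' m : ℕ, χ ((m + 1 : ℕ) : ZMod f) * ((q ^ (w₁ * ((m : ℝ) + 1)) : ℝ) : ℂ) *
          ((qNum q (w₁ * ((m : ℝ) + 1) + x) : ℝ) : ℂ) ^ (n - 1) :=
  stmt9_general q hq0 hq1 f χ x w₁ hw₁ n hn ρ hρ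
end
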